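/- Let b ≥ 2 be an integer, λ ∈ (1/b, 1), and φ : ℝ → ℝ^d a ℤ-periodic C² function. For every 𝐣 ∈ Σ, every finite word 𝐢 ∈ Λ^n (n ≥ 1), and every (x,y) ∈ [0,1)×ℝ^d, the transformation identity π_𝐣(g_𝐢(x,y)) = λ^n · π_{𝐢*𝐣}(x,y) + π_𝐣(g_𝐢(0,0)) holds. -/

import Mathlib

open MeasureTheory Filter Metric Set Function
open scoped ENNReal NNReal Topology

noncomputable section

namespace Weier

/-- `ℝ^d` as a Euclidean space. -/
abbrev Ed (d : ℕ) : Type := EuclideanSpace ℝ (Fin d)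

/-- The Weierstrass-type function `W^φ_{λ,b}(x) = ∑ λ^n φ(b^n x)`. -/
def Wf {E : Type} [NormedAddCommGroup E] [NormedSpace ℝ E]
    (b : ℕ) (lam : ℝ) (φ : ℝ → E) (x : ℝ) : E :=
  ∑' n : ℕ, lam ^ n • φ ((b : ℝ) ^ n * x)

/-- The graph of `W` over `[0,1)`, as a subset of `ℝ × ℝ^d = ℝ^{1+d}`. -/
def graphW {E : Type} [NormedAddCommGroup E] [NormedSpace ℝ E]
    (b : ℕ) (lam : ℝ) (φ : ℝ → E) : Set (ℝ × E) :=
  (fun x => (x, Wf b lam φ x)) '' Set.Ico (0 : ℝ) 1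

/-- Minimal number of `ε`-balls needed to cover `E`. -/
def coverNum {X : Type} [PseudoMetricSpace X] (E : Set X) (ε : ℝ) : ℕ :=
  sInf {n : ℕ | ∃ s : Finset X, s.card = n ∧ E ⊆ ⋃ x ∈ s, Metric.ball x ε}

/-- `E` has box (Minkowski) dimension `D`. -/
def HasBoxDim {X : Type} [PseudoMetricSpace X] (E : Set X) (D : ℝ) : Prop :=
  Tendsto (fun ε : ℝ => Real.log (coverNum E ε) / Real.log (1 / ε)) (𝓝[>] (0 : ℝ)) (𝓝 D)

/-- The upper box dimension of `E`. -/
def upperBoxDim {X : Type} [PseudoMetricSpace X] (E : Set X) : ℝ :=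
  limsup (fun ε : ℝ => Real.log (coverNum E ε) / Real.log (1 / ε)) (𝓝[>] (0 : ℝ))

/-- Orthogonal projection onto a subspace `V`, as a self-map of the ambient space. -/
def projS {d : ℕ} (V : Submodule ℝ (Ed d)) (x : Ed d) : Ed d :=
  (V.orthogonalProjectionOnto x : Ed d)

/-- `q(φ,λ,b)`: the maximal dimension of a subspace `V ≤ ℝ^d` such that
`π_V ∘ W^φ_{λ,b}` is Lipschitz. -/
def qval (d b : ℕ) (lam : ℝ) (φ : ℝ → Ed d) : ℕ :=
  sSup {n : ℕ | ∃ V : Submodule ℝ (Ed d), Module.finrank ℝ V = n ∧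
    ∃ K : ℝ≥0, LipschitzWith K fun x => projS V (Wf b lam φ x)}

/-- `p(φ,b) = min_{λ ∈ (1/b,1)} q(φ,λ,b)`. -/
def pval (d b : ℕ) (φ : ℝ → Ed d) : ℕ :=
  sInf {n : ℕ | ∃ lam ∈ Set.Ioo (1 / (b : ℝ)) 1, qval d b lam φ = n}

/-- `Y^φ_{λ,b}(x,𝐣) = -∑_{n≥1} γ^n φ'((x + j₁ + j₂ b + ⋯ + j_n b^{n-1})/b^n)`
with `γ = 1/(bλ)`; here `j k` stands for `j_{k+1}`. -/
def Yf {E : Type} [NormedAddCommGroup E] [NormedSpace ℝ E]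
    (b : ℕ) (lam : ℝ) (φ : ℝ → E) (x : ℝ) (j : ℕ → Fin b) : E :=
  -∑' n : ℕ, (1 / ((b : ℝ) * lam)) ^ (n + 1) •
      deriv φ ((x + ∑ k ∈ Finset.range (n + 1), ((j k : ℕ) : ℝ) * (b : ℝ) ^ k) / (b : ℝ) ^ (n + 1))

/-- Condition (H*): all the functions `Y(·,𝐣)`, `𝐣 ∈ Σ`, coincide. -/
def CondHstar {E : Type} [NormedAddCommGroup E] [NormedSpace ℝ E]
    (b : ℕ) (lam : ℝ) (φ : ℝ → E) : Prop :=
  ∀ i j : ℕ → Fin b, ∀ x : ℝ, Yf b lam φ x i = Yf b lam φ x j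

/-- Condition (H) for `φ : ℝ → ℝ^d`: for every one-dimensional subspace `A` and all
`𝐢 ≠ 𝐣`, the function `Y^{π_A φ}(·,𝐢) - Y^{π_A φ}(·,𝐣)` is not identically zero. -/
def CondH (d b : ℕ) (lam : ℝ) (φ : ℝ → Ed d) : Prop :=
  ∀ A : Submodule ℝ (Ed d), Module.finrank ℝ A = 1 →
    ∀ i j : ℕ → Fin b, i ≠ j →
      ¬ ∀ x : ℝ, Yf b lam (fun t => projS A (φ t)) x i = Yf b lam (fun t => projS A (φ t)) x j

/-- Condition (H) in the one-dimensional (real-valued) case. -/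
def CondH1 (b : ℕ) (lam : ℝ) (φ : ℝ → ℝ) : Prop :=
  ∀ i j : ℕ → Fin b, i ≠ j → ¬ ∀ x : ℝ, Yf b lam φ x i = Yf b lam φ x j

/-- `q'(φ,λ,b)`: the maximal dimension of a subspace `V ≤ ℝ^d` such that `π_V φ`
satisfies condition (H*). -/
def q'val (d b : ℕ) (lam : ℝ) (φ : ℝ → Ed d) : ℕ :=
  sSup {n : ℕ | ∃ V : Submodule ℝ (Ed d), Module.finrank ℝ V = n ∧
    CondHstar b lam fun x => projS V (φ x)}

/-- `p'(φ,b) = min_{λ ∈ (1/b,1)} q'(φ,λ,b)`. -/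
def p'val (d b : ℕ) (φ : ℝ → Ed d) : ℕ :=
  sInf {n : ℕ | ∃ lam ∈ Set.Ioo (1 / (b : ℝ)) 1, q'val d b lam φ = n}

/-- The lift `μ` of Lebesgue measure on `[0,1)` to the graph of `W`. -/
def muW (d b : ℕ) (lam : ℝ) (φ : ℝ → Ed d) : Measure (ℝ × Ed d) :=
  Measure.map (fun x => (x, Wf b lam φ x)) (volume.restrict (Set.Ico (0 : ℝ) 1))

/-- `Γ_𝐣(x) = ∫₀ˣ Y(t,𝐣) dt`. -/
def Gam {E : Type} [NormedAddCommGroup E] [NormedSpace ℝ E]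
    (b : ℕ) (lam : ℝ) (φ : ℝ → E) (j : ℕ → Fin b) (x : ℝ) : E :=
  ∫ t in (0 : ℝ)..x, Yf b lam φ t j

/-- The flow projection `π_𝐣(x,y) = y - Γ_𝐣(x)`. -/
def pj {E : Type} [NormedAddCommGroup E] [NormedSpace ℝ E] [CompleteSpace E]
    (b : ℕ) (lam : ℝ) (φ : ℝ → E) (j : ℕ → Fin b) (p : ℝ × E) : E :=
  p.2 - Gam b lam φ j p.1

/-- `ν` is the Bernoulli product on `Σ = Λ^{ℤ₊}` of the uniform measure on `Λ = {0,…,b-1}`: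
it is a probability measure giving every cylinder of length `n` measure `b^{-n}`. -/
def IsBernoulli (b : ℕ) (ν : Measure (ℕ → Fin b)) : Prop :=
  IsProbabilityMeasure ν ∧
    ∀ (n : ℕ) (w : Fin n → Fin b), ν {j | ∀ k : Fin n, j (k : ℕ) = w k} = (1 / (b : ℝ≥0∞)) ^ n

/-- A measure is exact dimensional with dimension `β` if
`log ω(B(x,r))/log r → β` as `r → 0⁺` for `ω`-a.e. `x`. -/
def IsExactDim {X : Type} [PseudoMetricSpace X] [MeasurableSpace X]
    (ω : Measure X) (β : ℝ) : Prop :=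
  ∀ᵐ x ∂ω, Tendsto (fun r : ℝ => Real.log (ω (Metric.ball x r)).toReal / Real.log r)
    (𝓝[>] (0 : ℝ)) (𝓝 β)

/-- The level-`n` `b`-adic cell of `ℝ^d` with index `k`. -/
def bcell (d b n : ℕ) (k : Fin d → ℤ) : Set (Ed d) :=
  {x | ∀ i, (k i : ℝ) / (b : ℝ) ^ n ≤ x i ∧ x i < ((k i : ℝ) + 1) / (b : ℝ) ^ n}

/-- The entropy `H(ω, ℒ_n)` (with logarithms in base `b`) of a measure with respect to
the level-`n` `b`-adic partition of `ℝ^d`. -/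
def entH (d b n : ℕ) (ω : Measure (Ed d)) : ℝ :=
  ∑' k : Fin d → ℤ, -((ω (bcell d b n k)).toReal * Real.logb b (ω (bcell d b n k)).toReal)

/-- The level-`i` `b`-adic cell containing `x`. -/
def cellOf (d b i : ℕ) (x : Ed d) : Set (Ed d) :=
  bcell d b i fun t => ⌊x t * (b : ℝ) ^ i⌋

/-- The component measure `ω_{x,i}`: the normalized restriction of `ω` to the level-`i`
`b`-adic cell containing `x`. -/
def compMeas (d b i : ℕ) (ω : Measure (Ed d)) (x : Ed d) : Measure (Ed d) :=
  (ω (cellOf d b i x))⁻¹ • ω.restrict (cellOf d b i x)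

/-- `ω` is `(V,ε,m)`-saturated. -/
def Saturated (d b : ℕ) (ω : Measure (Ed d)) (V : Submodule ℝ (Ed d)) (ε : ℝ) (m : ℕ) : Prop :=
  (1 / (m : ℝ)) * entH d b m ω ≥
    (1 / (m : ℝ)) * entH d b m (Measure.map (projS Vᗮ) ω) + (Module.finrank ℝ V : ℝ) - ε

/-- `ω` is `(V,ε)`-concentrated: some translate `V + y` of `V` carries `1-ε` of the mass
of `ω` within distance `ε`. -/
def Concentrated (d : ℕ) (ω : Measure (Ed d)) (V : Submodule ℝ (Ed d)) (ε : ℝ) : Prop :=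
  ∃ y : Ed d, 1 - ε ≤ (ω {z | ∃ v ∈ V, dist z (v + y) ≤ ε}).toReal

/-- The local inverse branch `g_i(x,y) = ((x+i)/b, λ y + φ((x+i)/b))`. -/
def gmap {E : Type} [NormedAddCommGroup E] [NormedSpace ℝ E]
    (b : ℕ) (lam : ℝ) (φ : ℝ → E) (i : Fin b) (p : ℝ × E) : ℝ × E :=
  ((p.1 + (i : ℕ)) / (b : ℝ), lam • p.2 + φ ((p.1 + (i : ℕ)) / (b : ℝ)))

/-- `g_𝐢 = g_{i₁} ∘ ⋯ ∘ g_{i_n}` for a finite word `𝐢 = [i₁,…,i_n]`. -/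
def gword {E : Type} [NormedAddCommGroup E] [NormedSpace ℝ E]
    (b : ℕ) (lam : ℝ) (φ : ℝ → E) (l : List (Fin b)) : ℝ × E → ℝ × E :=
  l.foldr (fun i f => gmap b lam φ i ∘ f) id

/-- Concatenation of a finite word with an infinite word. -/
def wcat {b : ℕ} (l : List (Fin b)) (j : ℕ → Fin b) : ℕ → Fin b :=
  fun k => if h : k < l.length then l.get ⟨k, h⟩ else j (k - l.length)

/-- The `m`-th Fourier coefficient `a_m(ψ) = ∫₀¹ ψ(x) e^{-2πimx} dx` of a
`ℤ`-periodic function `ψ : ℝ → ℝ`. -/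
def fCoeff (ψ : ℝ → ℝ) (m : ℤ) : ℂ :=
  ∫ x in (0 : ℝ)..1, (ψ x : ℂ) * Complex.exp (-(2 * (Real.pi : ℂ) * Complex.I * (m : ℂ) * (x : ℂ)))

/-- `tEnum b k` is `t_{k+1}`, where `t₁ < t₂ < ⋯` enumerates the positive integers
not divisible by `b`. -/
def tEnum (b : ℕ) (k : ℕ) : ℕ :=
  Nat.nth (fun t => 0 < t ∧ ¬ b ∣ t) k

/-- The vector `(R_{1,k+1}(λ),…,R_{d,k+1}(λ))` of real parts. -/
def Rvec (d b : ℕ) (lam : ℝ) (φ : ℝ → Ed d) (k : ℕ) : Ed d :=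
  (EuclideanSpace.equiv (Fin d) ℝ).symm fun j =>
    ∑' n : ℕ, (fCoeff (fun x => φ x j) ((tEnum b k : ℤ) * (b : ℤ) ^ n)).re * lam⁻¹ ^ n

/-- The vector `(I_{1,k+1}(λ),…,I_{d,k+1}(λ))` of imaginary parts. -/
def Ivec (d b : ℕ) (lam : ℝ) (φ : ℝ → Ed d) (k : ℕ) : Ed d :=
  (EuclideanSpace.equiv (Fin d) ℝ).symm fun j =>
    ∑' n : ℕ, (fCoeff (fun x => φ x j) ((tEnum b k : ℤ) * (b : ℤ) ^ n)).im * lam⁻¹ ^ n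

/-- `Ker A_{λ,m} = {y : yA_{λ,m} = 0}`, i.e. the vectors orthogonal to the first `m`
columns `R_{·,1},…,R_{·,m}` and `I_{·,1},…,I_{·,m}`. -/
def kerA (d b : ℕ) (lam : ℝ) (φ : ℝ → Ed d) (m : ℕ) : Submodule ℝ (Ed d) :=
  ⨅ k ∈ Finset.range m,
    (LinearMap.ker (innerSL ℝ (Rvec d b lam φ k) : Ed d →ₗ[ℝ] ℝ) ⊓ LinearMap.ker (innerSL ℝ (Ivec d b lam φ k) : Ed d →ₗ[ℝ] ℝ))

/-- The `C^r` norm `‖f‖_r = ∑_{k=0}^r ‖f^{(k)}‖_∞`. -/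
def cnorm (d r : ℕ) (f : ℝ → Ed d) : ℝ :=
  ∑ k ∈ Finset.range (r + 1), ⨆ x : ℝ, ‖iteratedDeriv k f x‖

/-! The series defining `Y(·, 𝐣)` converges uniformly because `φ'` is bounded and
`γ = 1/(bλ) < 1`. Splitting off its first term gives the self-similarity
`Y(x, i𝐣) = γ (Y((x+i)/b, 𝐣) - φ'((x+i)/b))`; integrating it (substituting `s = (t+i)/b`)
yields `λ Γ_{i𝐣}(x) = Γ_𝐣((x+i)/b) - Γ_𝐣(i/b) - (φ((x+i)/b) - φ(i/b))`, which is the identity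
for words of length one. Iterating over the letters of `𝐢` gives the general case, the letters
being prepended to `𝐣` in reverse order. -/

section TransformationIdentity

variable {E : Type} [NormedAddCommGroup E] [NormedSpace ℝ E] {b : ℕ} {lam : ℝ} {φ : ℝ → E}

lemma wcat_nil (j : ℕ → Fin b) : wcat [] j = j := by
  funext k
  simp [wcat]

lemma wcat_append (l₁ l₂ : List (Fin b)) (j : ℕ → Fin b) :
    wcat (l₁ ++ l₂) j = wcat l₁ (wcat l₂ j) := by
  funext k
  simp only [wcat, List.length_append, List.get_eq_getElem]
  by_cases h₁ : k < l₁.length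
  · rw [dif_pos (by omega), dif_pos h₁, List.getElem_append_left h₁]
  · rw [dif_neg h₁]
    by_cases h₂ : k < l₁.length + l₂.length
    · rw [dif_pos h₂, dif_pos (by omega), List.getElem_append_right (by omega)]
    · rw [dif_neg h₂, dif_neg (by omega)]
      congr 1
      omega

lemma digit_point_wcat_singleton (i : Fin b) (j : ℕ → Fin b) (x : ℝ) (n : ℕ) :
    (x + ∑ k ∈ Finset.range (n + 1), ((wcat [i] j k : ℕ) : ℝ) * (b : ℝ) ^ k) / (b : ℝ) ^ (n + 1) =
      ((x + (i : ℕ)) / b + ∑ k ∈ Finset.range n, ((j k : ℕ) : ℝ) * (b : ℝ) ^ k) / (b : ℝ) ^ n := by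
  have hb : (b : ℝ) ≠ 0 := Nat.cast_ne_zero.mpr i.pos.ne'
  have hsum : ∑ k ∈ Finset.range n, ((wcat [i] j (k + 1) : ℕ) : ℝ) * (b : ℝ) ^ (k + 1) =
      b * ∑ k ∈ Finset.range n, ((j k : ℕ) : ℝ) * (b : ℝ) ^ k := by
    rw [Finset.mul_sum]
    exact Finset.sum_congr rfl fun k _ => by simp [wcat]; ring
  rw [Finset.sum_range_succ', hsum]
  simp only [wcat, List.length_singleton, zero_lt_one, dite_true, List.get_eq_getElem,
    List.getElem_cons_zero, pow_zero, mul_one]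
  field_simp
  ring

theorem _root_.Function.Periodic.deriv {c : ℝ} (hper : Periodic φ c) :
    Periodic (deriv φ) c := fun x => by
  rw [← deriv_comp_add_const, hper.funext]

lemma exists_norm_deriv_le (hper : Periodic φ 1) (hφ : ContDiff ℝ 1 φ) :
    ∃ M, ∀ x, ‖deriv φ x‖ ≤ M := by
  obtain ⟨M, hM⟩ := isBounded_iff_forall_norm_le.mp
    (hper.deriv.isBounded_of_continuous one_ne_zero (hφ.continuous_deriv le_rfl))
  exact ⟨M, fun x => hM _ ⟨x, rfl⟩⟩

lemma one_div_mem_Ioo_of_one_lt {t : ℝ} (ht : 1 < t) : 1 / t ∈ Set.Ioo 0 1 :=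
  ⟨by positivity, (div_lt_one (by linarith)).mpr ht⟩

lemma norm_Yf_term_le {M : ℝ} (hM : ∀ x, ‖deriv φ x‖ ≤ M) (hbl : 1 < (b : ℝ) * lam)
    (n : ℕ) (x : ℝ) :
    ‖(1 / ((b : ℝ) * lam)) ^ (n + 1) • deriv φ x‖ ≤ (1 / ((b : ℝ) * lam)) ^ (n + 1) * M := by
  rw [norm_smul, norm_pow, Real.norm_of_nonneg (one_div_mem_Ioo_of_one_lt hbl).1.le]
  exact mul_le_mul_of_nonneg_left (hM x) (by positivity)

lemma summable_geometric_succ_mul {γ : ℝ} (hγ : γ ∈ Set.Ioo 0 1) (M : ℝ) :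
    Summable fun n : ℕ => γ ^ (n + 1) * M :=
  ((summable_nat_add_iff 1).mpr (summable_geometric_of_lt_one hγ.1.le hγ.2)).mul_right M

variable [CompleteSpace E]

lemma summable_Yf_terms (hbl : 1 < (b : ℝ) * lam) (hper : Periodic φ 1) (hφ : ContDiff ℝ 1 φ)
    (c : ℕ → ℝ) : Summable fun n : ℕ => (1 / ((b : ℝ) * lam)) ^ (n + 1) • deriv φ (c n) := by
  obtain ⟨M, hM⟩ := exists_norm_deriv_le hper hφ
  exact (summable_geometric_succ_mul (one_div_mem_Ioo_of_one_lt hbl) M).of_norm_bounded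
    fun n => norm_Yf_term_le hM hbl n _

lemma continuous_Yf (hbl : 1 < (b : ℝ) * lam) (hper : Periodic φ 1) (hφ : ContDiff ℝ 1 φ)
    (j : ℕ → Fin b) : Continuous fun x => Yf b lam φ x j := by
  obtain ⟨M, hM⟩ := exists_norm_deriv_le hper hφ
  refine (continuous_tsum (fun n => ?_)
    (summable_geometric_succ_mul (one_div_mem_Ioo_of_one_lt hbl) M)
    fun n x => norm_Yf_term_le hM hbl n _).neg
  exact ((hφ.continuous_deriv le_rfl).comp (by fun_prop)).const_smul _

lemma Yf_wcat_singleton (hbl : 1 < (b : ℝ) * lam) (hper : Periodic φ 1) (hφ : ContDiff ℝ 1 φ)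
    (i : Fin b) (j : ℕ → Fin b) (x : ℝ) :
    Yf b lam φ x (wcat [i] j) =
      (1 / ((b : ℝ) * lam)) • (Yf b lam φ ((x + (i : ℕ)) / b) j - deriv φ ((x + (i : ℕ)) / b)) := by
  unfold Yf
  simp_rw [digit_point_wcat_singleton]
  rw [(summable_Yf_terms hbl hper hφ _).tsum_eq_zero_add]
  simp_rw [pow_succ' _ (_ + 1), ← smul_smul]
  rw [(summable_Yf_terms hbl hper hφ _).tsum_const_smul]
  simp only [Finset.range_zero, Finset.sum_empty, add_zero, pow_zero, div_one, zero_add, pow_one]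
  module

lemma integral_Yf_sub_deriv (hbl : 1 < (b : ℝ) * lam) (hper : Periodic φ 1)
    (hφ : ContDiff ℝ 1 φ) (j : ℕ → Fin b) (a c : ℝ) :
    ∫ s in a..c, (Yf b lam φ s j - deriv φ s) =
      (Gam b lam φ j c - Gam b lam φ j a) - (φ c - φ a) := by
  have hY := continuous_Yf hbl hper hφ j
  rw [intervalIntegral.integral_sub (hY.intervalIntegrable _ _)
    ((hφ.continuous_deriv le_rfl).intervalIntegrable _ _), Gam, Gam,
    intervalIntegral.integral_interval_sub_left (hY.intervalIntegrable _ _)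
      (hY.intervalIntegrable _ _),
    intervalIntegral.integral_deriv_eq_sub (fun t _ => (hφ.differentiable one_ne_zero) t)
      ((hφ.continuous_deriv le_rfl).intervalIntegrable _ _)]

lemma Gam_wcat_singleton (hbl : 1 < (b : ℝ) * lam) (hper : Periodic φ 1) (hφ : ContDiff ℝ 1 φ)
    (i : Fin b) (j : ℕ → Fin b) (x : ℝ) :
    lam • Gam b lam φ (wcat [i] j) x =
      (Gam b lam φ j ((x + (i : ℕ)) / b) - Gam b lam φ j (((i : ℕ) : ℝ) / b)) -
        (φ ((x + (i : ℕ)) / b) - φ (((i : ℕ) : ℝ) / b)) := by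
  have hb : (b : ℝ) ≠ 0 := Nat.cast_ne_zero.mpr i.pos.ne'
  have hsubst :
      ∫ t in (0 : ℝ)..x, (Yf b lam φ ((t + (i : ℕ)) / b) j - deriv φ ((t + (i : ℕ)) / b)) =
      (b : ℝ) • ∫ s in ((i : ℕ) : ℝ) / b..(x + (i : ℕ)) / b, (Yf b lam φ s j - deriv φ s) := by
    simp_rw [add_div]
    rw [intervalIntegral.integral_comp_div_add (fun s => Yf b lam φ s j - deriv φ s) hb,
      zero_div, zero_add]
  rw [Gam, intervalIntegral.integral_congr fun t _ => Yf_wcat_singleton hbl hper hφ i j t,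
    intervalIntegral.integral_smul, hsubst, integral_Yf_sub_deriv hbl hper hφ,
    smul_smul, smul_smul]
  have hlam : lam ≠ 0 := by
    rintro rfl
    norm_num at hbl
  have hcancel : lam * (1 / ((b : ℝ) * lam)) * b = 1 := by field_simp
  rw [hcancel, one_smul]

lemma pj_gmap (hbl : 1 < (b : ℝ) * lam) (hper : Periodic φ 1) (hφ : ContDiff ℝ 1 φ)
    (i : Fin b) (j : ℕ → Fin b) (p : ℝ × E) :
    pj b lam φ j (gmap b lam φ i p) =
      lam • pj b lam φ (wcat [i] j) p + pj b lam φ j (gmap b lam φ i (0, 0)) := by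
  simp only [pj, gmap, smul_zero, zero_add, smul_sub, Gam_wcat_singleton hbl hper hφ]
  abel

lemma pj_zero (j : ℕ → Fin b) : pj b lam φ j ((0 : ℝ), (0 : E)) = 0 := by
  simp [pj, Gam]

lemma pj_gword (hbl : 1 < (b : ℝ) * lam) (hper : Periodic φ 1) (hφ : ContDiff ℝ 1 φ)
    (l : List (Fin b)) (j : ℕ → Fin b) (p : ℝ × E) :
    pj b lam φ j (gword b lam φ l p) =
      lam ^ l.length • pj b lam φ (wcat l.reverse j) p +
        pj b lam φ j (gword b lam φ l ((0 : ℝ), (0 : E))) := by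
  induction l generalizing j with
  | nil => simp [gword, wcat_nil, pj_zero]
  | cons i l ih =>
    have hcons (q : ℝ × E) : gword b lam φ (i :: l) q = gmap b lam φ i (gword b lam φ l q) := rfl
    rw [hcons, hcons, pj_gmap hbl hper hφ i j (gword b lam φ l p),
      pj_gmap hbl hper hφ i j (gword b lam φ l (0, 0)), ih, List.reverse_cons,
      wcat_append, List.length_cons, pow_succ', mul_smul, smul_add]
    abel

end TransformationIdentity

theorem transformation_identity_general (d b : ℕ) (lam : ℝ)
    (hlam : lam ∈ Set.Ioo (1 / (b : ℝ)) 1) (φ : ℝ → Ed d)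
    (hper : Function.Periodic φ 1) (hC2 : ContDiff ℝ 2 φ) :
    ∀ l : List (Fin b), l ≠ [] → ∀ j : ℕ → Fin b,
      ∀ x ∈ Set.Ico (0 : ℝ) 1, ∀ y : Ed d,
        pj b lam φ j (gword b lam φ l (x, y)) =
          lam ^ l.length • pj b lam φ (wcat l.reverse j) (x, y) +
            pj b lam φ j (gword b lam φ l ((0 : ℝ), (0 : Ed d))) := by
  intro l _ j x _ y
  have hb : (0 : ℝ) < b := Nat.cast_pos.mpr (j 0).pos
  have hbl : 1 < (b : ℝ) * lam := (div_lt_iff₀' hb).mp hlam.1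
  exact pj_gword hbl hper (hC2.of_le one_le_two) l j (x, y)

/-- Transformation identity: `π_𝐣(g_𝐢(x,y)) = λ^{|𝐢|} π_{𝐢*𝐣}(x,y) + π_𝐣(g_𝐢(0,0))` for any
nonempty finite word `𝐢`, any `𝐣 ∈ Σ` and `(x,y) ∈ [0,1) × ℝ^d`. -/
theorem transformation_identity (d b : ℕ) (hb : 2 ≤ b) (lam : ℝ)
    (hlam : lam ∈ Set.Ioo (1 / (b : ℝ)) 1) (φ : ℝ → Ed d)
    (hper : Function.Periodic φ 1) (hC2 : ContDiff ℝ 2 φ) :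
    ∀ l : List (Fin b), l ≠ [] → ∀ j : ℕ → Fin b,
      ∀ x ∈ Set.Ico (0 : ℝ) 1, ∀ y : Ed d,
        pj b lam φ j (gword b lam φ l (x, y)) =
          lam ^ l.length • pj b lam φ (wcat l.reverse j) (x, y) +
            pj b lam φ j (gword b lam φ l ((0 : ℝ), (0 : Ed d))) :=
  transformation_identity_general d b lam hlam φ hper hC2

end Weier
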